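/- Let G be a topological group and K ⊆ G a compact subgroup. Then the natural left-translation action of G on the quotient space G/K is proper. -/

import Mathlib

open Set

private lemma mk_proper {G : Type*} [Group G] [TopologicalSpace G] [IsTopologicalGroup G]
    (K : Subgroup G) (hK : IsCompact (K : Set G)) :
    IsProperMap (QuotientGroup.mk : G → G ⧸ K) := by
  rw [isProperMap_iff_isClosedMap_and_compact_fibers]
  refine ⟨continuous_quotient_mk', QuotientGroup.isClosedMap_coe hK, fun y ↦ ?_⟩
  obtain ⟨g, rfl⟩ := QuotientGroup.mk_surjective y
  have : ((QuotientGroup.mk : G → G ⧸ K) ⁻¹' {(g : G ⧸ K)}) = (g * ·) '' (K : Set G) := by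
    ext x
    simp only [mem_preimage, mem_singleton_iff, mem_image]
    constructor
    · intro h
      refine ⟨g⁻¹ * x, ?_, by group⟩
      have := (QuotientGroup.eq (s := K)).mp h.symm
      exact this
    · rintro ⟨k, hk, rfl⟩
      exact (QuotientGroup.eq (s := K)).mpr (by simpa using hk) |>.symm
  rw [this]
  exact hK.image (continuous_mul_left g)

private def shear {G : Type*} [Group G] [TopologicalSpace G] [IsTopologicalGroup G] :
    G × G ≃ₜ G × G where
  toFun p := (p.1 * p.2, p.2)
  invFun p := (p.1 * p.2⁻¹, p.2)
  left_inv p := by simp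
  right_inv p := by simp
  continuous_toFun := by continuity
  continuous_invFun := by continuity

/-- For a compact subgroup `K` of a topological group `G`, the natural left-translation
action of `G` on the quotient `G ⧸ K` is proper. -/
theorem stmt_5 {G : Type*} [Group G] [TopologicalSpace G] [IsTopologicalGroup G]
    (K : Subgroup G) (hK : IsCompact (K : Set G)) :
    IsProperMap (fun p : G × (G ⧸ K) => (p.1 • p.2, p.2)) := by
  have hπ := mk_proper K hK
  have hA : IsProperMap (fun p : G × G => ((QuotientGroup.mk (p.1 * p.2) : G ⧸ K), (QuotientGroup.mk p.2 : G ⧸ K))) :=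
    (hπ.prodMap hπ).comp (shear (G := G)).isProperMap
  have hsurj : Function.Surjective (Prod.map (id : G → G) (QuotientGroup.mk : G → G ⧸ K)) :=
    Function.Surjective.prodMap Function.surjective_id QuotientGroup.mk_surjective
  refine isProperMap_of_comp_of_surj
    (continuous_id.prodMap continuous_quotient_mk') ?_ ?_ hsurj
  · exact ((continuous_fst.smul continuous_snd).prodMk continuous_snd)
  · convert hA using 1
    rfl
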